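/- arXiv:2603.05408 — 2 statements merged into one kernel-verified Lean document; each statement's English description precedes it below -/
import Mathlib

section
/- For all integers M ≥ 1, S satisfies the recurrence S(M+1) = S(M) - 1/(M+1) + 2/(2M+1). -/
/-- `S(M) = 2^{1-2M} C(2M,M) ∑_{m=0}^{M-1} (-1)^m (C(M,m)/C(2M,2m))
∑_{ℓ=0}^m (-1)^ℓ C(M,ℓ)/(2m+1-2ℓ)`. -/
noncomputable def Ssum (M : ℕ) : ℝ :=
  ((2 * M).choose M : ℝ) / 2 ^ (2 * M - 1) *
    ∑ m ∈ Finset.range M,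
      (-1 : ℝ) ^ m * ((M.choose m : ℝ) / ((2 * M).choose (2 * m) : ℝ)) *
        ∑ ℓ ∈ Finset.range (m + 1),
          (-1 : ℝ) ^ ℓ * (M.choose ℓ : ℝ) / (2 * (m : ℝ) + 1 - 2 * (ℓ : ℝ))

open Finset Nat

/-! ### Auxiliary definitions -/

noncomputable def Tsum (M m : ℕ) : ℝ :=
  ∑ ℓ ∈ Finset.range (m + 1),
    (-1 : ℝ) ^ ℓ * (M.choose ℓ : ℝ) / (2 * (m : ℝ) + 1 - 2 * (ℓ : ℝ))

noncomputable def cc (M : ℕ) : ℝ := ((2*M).choose M : ℝ) / 2^(2*M-1)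
noncomputable def ww (M m : ℕ) : ℝ := (-1:ℝ)^m * ((M.choose m : ℝ) / ((2*M).choose (2*m) : ℝ))

/-! ### Basic lemmas about `Tsum` -/

lemma Tsum_zero (M : ℕ) : Tsum M 0 = 1 := by simp [Tsum]

lemma Tsum_succ (M m : ℕ) : Tsum (M+1) (m+1) = Tsum M (m+1) - Tsum M m := by
  unfold Tsum
  push_cast
  rw [Finset.sum_range_succ' (fun ℓ => (-1 : ℝ) ^ ℓ * ((M+1).choose ℓ : ℝ) / (2 * ((m:ℝ)+1) + 1 - 2 * (ℓ : ℝ))),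
      Finset.sum_range_succ' (fun ℓ => (-1 : ℝ) ^ ℓ * (M.choose ℓ : ℝ) / (2 * ((m:ℝ)+1) + 1 - 2 * (ℓ : ℝ)))]
  simp only [Nat.choose_succ_succ, Nat.choose_zero_right, Nat.succ_eq_add_one]
  push_cast
  have key : ∀ x ∈ Finset.range (m+1),
      (-1:ℝ) ^ (x + 1) * ((M.choose x : ℝ) + (M.choose (x+1) : ℝ)) / (2 * ((m:ℝ) + 1) + 1 - 2 * ((x:ℝ) + 1))
      = (-1:ℝ) ^ (x + 1) * ((M.choose (x+1) : ℝ)) / (2 * ((m:ℝ) + 1) + 1 - 2 * ((x:ℝ) + 1))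
        - (-1:ℝ) ^ x * ((M.choose x : ℝ)) / (2 * (m:ℝ) + 1 - 2 * (x:ℝ)) := by
    intro x _
    have hd : (2 * ((m:ℝ) + 1) + 1 - 2 * ((x:ℝ) + 1)) = (2 * (m:ℝ) + 1 - 2 * (x:ℝ)) := by ring
    rw [hd]
    ring
  rw [Finset.sum_congr rfl key, Finset.sum_sub_distrib]
  ring

/-! ### The classical partial-fraction identity -/

lemma pf_closed (n : ℕ) : ∀ x : ℝ, (∀ ℓ ∈ Finset.range (n+1), x - ℓ ≠ 0) →
    ∑ ℓ ∈ Finset.range (n+1), (-1 : ℝ) ^ ℓ * (n.choose ℓ : ℝ) / (x - ℓ)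
      = (-1) ^ n * (n ! : ℝ) / ∏ ℓ ∈ Finset.range (n+1), (x - (ℓ:ℝ)) := by
  induction n with
  | zero => intro x hx; simp
  | succ n ih =>
    intro x hx
    have hx0 : x ≠ 0 := by have := hx 0 (by simp); simpa using this
    have hxn : ∀ ℓ ∈ Finset.range (n+1), x - (ℓ:ℝ) ≠ 0 := fun ℓ hℓ => hx ℓ (by
      simp at hℓ ⊢; omega)
    have hxn1 : ∀ ℓ ∈ Finset.range (n+1), (x-1) - (ℓ:ℝ) ≠ 0 := by
      intro ℓ hℓ
      have := hx (ℓ+1) (by simp at hℓ ⊢; omega)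
      push_cast at this ⊢
      intro h; apply this; linarith
    rw [Finset.sum_range_succ' (fun ℓ => (-1 : ℝ) ^ ℓ * ((n+1).choose ℓ : ℝ) / (x - ℓ))]
    simp only [Nat.choose_succ_succ, Nat.choose_zero_right, Nat.succ_eq_add_one]
    push_cast
    have key : ∀ ℓ ∈ Finset.range (n+1),
        (-1:ℝ) ^ (ℓ + 1) * ((n.choose ℓ : ℝ) + (n.choose (ℓ+1) : ℝ)) / (x - ((ℓ:ℝ) + 1))
        = (-1:ℝ) ^ (ℓ + 1) * (n.choose (ℓ+1) : ℝ) / (x - ((ℓ:ℝ) + 1))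
          - (-1:ℝ) ^ ℓ * (n.choose ℓ : ℝ) / ((x - 1) - (ℓ:ℝ)) := by
      intro ℓ _
      have hd : x - ((ℓ:ℝ) + 1) = (x-1) - (ℓ:ℝ) := by ring
      rw [hd]; ring
    rw [Finset.sum_congr rfl key, Finset.sum_sub_distrib]
    have reassemble :
        (∑ ℓ ∈ Finset.range (n+1), (-1:ℝ) ^ (ℓ+1) * (n.choose (ℓ+1) : ℝ) / (x - ((ℓ:ℝ)+1)))
          + (-1:ℝ)^0 * 1 / (x - 0)
        = ∑ ℓ ∈ Finset.range (n+2), (-1:ℝ) ^ ℓ * (n.choose ℓ : ℝ) / (x - (ℓ:ℝ)) := by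
      rw [Finset.sum_range_succ' (fun ℓ => (-1 : ℝ) ^ ℓ * (n.choose ℓ : ℝ) / (x - (ℓ:ℝ)))]
      simp
    rw [sub_add_eq_add_sub, reassemble]
    rw [Finset.sum_range_succ (fun ℓ => (-1 : ℝ) ^ ℓ * (n.choose ℓ : ℝ) / (x - (ℓ:ℝ))) (n+1)]
    rw [Nat.choose_succ_self]
    simp only [Nat.cast_zero, mul_zero, zero_div, add_zero]
    rw [ih x hxn, ih (x-1) hxn1]
    have hA : (∏ ℓ ∈ Finset.range (n+1), (x - (ℓ:ℝ))) ≠ 0 := Finset.prod_ne_zero_iff.2 hxn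
    have hB : (∏ ℓ ∈ Finset.range (n+1), ((x-1) - (ℓ:ℝ))) ≠ 0 := Finset.prod_ne_zero_iff.2 hxn1
    have hP2A : ∏ ℓ ∈ Finset.range (n+2), (x - (ℓ:ℝ))
        = (∏ ℓ ∈ Finset.range (n+1), (x - (ℓ:ℝ))) * (x - ((n:ℝ)+1)) := by
      rw [Finset.prod_range_succ]; push_cast; ring
    have hP2B : ∏ ℓ ∈ Finset.range (n+2), (x - (ℓ:ℝ))
        = x * ∏ ℓ ∈ Finset.range (n+1), ((x-1) - (ℓ:ℝ)) := by
      rw [Finset.prod_range_succ' (fun ℓ => (x - (ℓ:ℝ)))]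
      push_cast
      rw [sub_zero, mul_comm]
      congr 1
      exact Finset.prod_congr rfl (fun i _ => by ring)
    have hxn1' : x - ((n:ℝ)+1) ≠ 0 := by
      have := hx (n+1) (by simp)
      push_cast at this; intro h; apply this; linarith
    rw [hP2A]
    set A := ∏ ℓ ∈ Finset.range (n+1), (x - (ℓ:ℝ)) with hAdef
    set B := ∏ ℓ ∈ Finset.range (n+1), ((x-1) - (ℓ:ℝ)) with hBdef
    have hAB : x * B = A * (x - ((n:ℝ)+1)) := by rw [← hP2A, hP2B]
    rw [div_sub_div _ _ hA hB, div_eq_div_iff (mul_ne_zero hA hB) (mul_ne_zero hA hxn1')]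
    push_cast [Nat.factorial_succ]
    linear_combination ((-1:ℝ)^n * (n ! : ℝ) * A) * hAB

/-! ### Product of half-integers -/

lemma prod_half (M : ℕ) :
    ∏ ℓ ∈ Finset.range (M+1), ((M:ℝ) + 1/2 - (ℓ:ℝ))
      = ((2*M+1)! : ℝ) / (2 ^ (2*M+1) * (M ! : ℝ)) := by
  induction M with
  | zero => simp [Nat.factorial]
  | succ M ih =>
    push_cast
    rw [Finset.prod_range_succ' (fun ℓ => ((M:ℝ)+1 + 1/2 - (ℓ:ℝ)))]
    have h1 : ∀ i ∈ Finset.range (M+1), ((M:ℝ)+1+1/2-((i+1:ℕ):ℝ)) = ((M:ℝ)+1/2-(i:ℝ)) := by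
      intro i _; push_cast; ring
    rw [Finset.prod_congr rfl h1, ih]
    have h2 : ((2*(M+1)+1)! : ℝ) = (2*(M:ℝ)+3) * (2*(M:ℝ)+2) * ((2*M+1)! : ℝ) := by
      have : 2*(M+1)+1 = (2*M+1) + 1 + 1 := by ring
      rw [this, Nat.factorial_succ, Nat.factorial_succ]
      push_cast; ring
    have h3 : (((M+1) !) : ℝ) = ((M:ℝ)+1) * (M ! : ℝ) := by
      rw [Nat.factorial_succ]; push_cast; ring
    push_cast
    rw [h2, h3]
    have hf : (M ! : ℝ) ≠ 0 := by positivity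
    have hM1 : (M:ℝ)+1 ≠ 0 := by positivity
    field_simp
    ring

/-! ### Closed form for the diagonal value `T(M,M)` -/

lemma Tsum_diag (M : ℕ) :
    Tsum M M = (-1)^M * 4^M * (M ! : ℝ)^2 / ((2*M+1)! : ℝ) := by
  have hx : ∀ ℓ ∈ Finset.range (M+1), ((M:ℝ) + 1/2) - (ℓ:ℝ) ≠ 0 := by
    intro ℓ hℓ
    simp only [Finset.mem_range] at hℓ
    have : (ℓ:ℝ) ≤ (M:ℝ) := by exact_mod_cast Nat.lt_succ_iff.mp hℓ
    nlinarith
  have key := pf_closed M ((M:ℝ) + 1/2) hx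
  have step : Tsum M M = (1/2) * ∑ ℓ ∈ Finset.range (M+1),
      (-1 : ℝ) ^ ℓ * (M.choose ℓ : ℝ) / (((M:ℝ) + 1/2) - (ℓ:ℝ)) := by
    unfold Tsum
    rw [Finset.mul_sum]
    refine Finset.sum_congr rfl (fun ℓ hℓ => ?_)
    have hd := hx ℓ hℓ
    field_simp
  rw [step, key, prod_half]
  have hf : ((2*M+1)! : ℝ) ≠ 0 := by positivity
  have hm : (M ! : ℝ) ≠ 0 := by positivity
  have h4 : (2:ℝ)^(2*M+1) = 2 * 4^M := by
    rw [show 2*M+1 = 2*M+1 from rfl, pow_add, pow_mul]; norm_num; ring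
  rw [h4]
  field_simp

/-! ### The two binomial coefficient identities -/

lemma chcast (n k : ℕ) (h : k ≤ n) :
    ((n.choose k : ℕ) : ℝ) = (n ! : ℝ) / ((k ! : ℝ) * ((n-k)! : ℝ)) := by
  have := Nat.choose_mul_factorial_mul_factorial h
  have hk : (k ! : ℝ) ≠ 0 := by positivity
  have hnk : (((n-k)!) : ℝ) ≠ 0 := by positivity
  field_simp
  push_cast [← this]
  ring

lemma fact_step (a : ℕ) : ((a+1)! : ℝ) = ((a:ℝ)+1) * (a ! : ℝ) := by
  rw [Nat.factorial_succ]; push_cast; ring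

lemma lemA (m k : ℕ) :
    cc (m+k+2) * (ww (m+k+2) m - ww (m+k+2) (m+1)) = cc (m+k+1) * ww (m+k+1) m := by
  simp only [cc, ww]
  rw [show 2*(m+k+2) - 1 = 2*m+2*k+3 from by omega,
      show 2*(m+k+1) - 1 = 2*m+2*k+1 from by omega]
  rw [chcast (2*(m+k+2)) (m+k+2) (by omega),
      chcast (m+k+2) m (by omega),
      chcast (2*(m+k+2)) (2*m) (by omega),
      chcast (m+k+2) (m+1) (by omega),
      chcast (2*(m+k+2)) (2*(m+1)) (by omega),
      chcast (2*(m+k+1)) (m+k+1) (by omega),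
      chcast (m+k+1) m (by omega),
      chcast (2*(m+k+1)) (2*m) (by omega)]
  simp only [show 2*(m+k+2) - (m+k+2) = m+k+2 from by omega,
      show (m+k+2) - m = k+2 from by omega,
      show 2*(m+k+2) - 2*m = 2*k+4 from by omega,
      show (m+k+2) - (m+1) = k+1 from by omega,
      show 2*(m+k+2) - 2*(m+1) = 2*k+2 from by omega,
      show 2*(m+k+1) - (m+k+1) = m+k+1 from by omega,
      show (m+k+1) - m = k+1 from by omega,
      show 2*(m+k+1) - 2*m = 2*k+2 from by omega]
  have f1 : ((2*(m+k+2))! : ℝ) = (2*(m:ℝ)+2*k+4) * (2*(m:ℝ)+2*k+3) * ((2*(m+k+1))! : ℝ) := by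
    rw [show 2*(m+k+2) = 2*(m+k+1)+1+1 from by ring, fact_step, fact_step]; push_cast; ring
  have f2 : ((m+k+2)! : ℝ) = ((m:ℝ)+k+2) * ((m+k+1)! : ℝ) := by
    rw [show m+k+2 = (m+k+1)+1 from by ring, fact_step]; push_cast; ring
  have f3 : ((2*k+4)! : ℝ) = (2*(k:ℝ)+4)*(2*(k:ℝ)+3)*((2*k+2)! : ℝ) := by
    rw [show 2*k+4 = (2*k+2)+1+1 from by ring, fact_step, fact_step]; push_cast; ring
  have f4 : ((2*(m+1))! : ℝ) = (2*(m:ℝ)+2)*(2*(m:ℝ)+1)*((2*m)! : ℝ) := by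
    rw [show 2*(m+1) = (2*m)+1+1 from by ring, fact_step, fact_step]; push_cast; ring
  have f5 : ((m+1)! : ℝ) = ((m:ℝ)+1)*(m ! : ℝ) := fact_step m
  have f6 : ((k+2)! : ℝ) = ((k:ℝ)+2)*((k+1)! : ℝ) := by
    rw [show k+2 = (k+1)+1 from by ring, fact_step]; push_cast; ring
  rw [f1, f2, f3, f4, f5, f6]
  have h1 : ((m+k+1)! : ℝ) ≠ 0 := by positivity
  have h2 : ((2*(m+k+1))! : ℝ) ≠ 0 := by positivity
  have h3 : ((2*m)! : ℝ) ≠ 0 := by positivity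
  have h4 : (m ! : ℝ) ≠ 0 := by positivity
  have h5 : ((k+1)! : ℝ) ≠ 0 := by positivity
  have h6 : ((2*k+2)! : ℝ) ≠ 0 := by positivity
  have hd1 : (2*(m:ℝ)+2*(k:ℝ)+4) ≠ 0 := by positivity
  have hd2 : (2*(m:ℝ)+2*(k:ℝ)+3) ≠ 0 := by positivity
  have hd3 : ((m:ℝ)+(k:ℝ)+2) ≠ 0 := by positivity
  have hd4 : (2*(k:ℝ)+4) ≠ 0 := by positivity
  have hd5 : (2*(k:ℝ)+3) ≠ 0 := by positivity
  have hd6 : (2*(m:ℝ)+2) ≠ 0 := by positivity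
  have hd7 : (2*(m:ℝ)+1) ≠ 0 := by positivity
  have hd8 : ((m:ℝ)+1) ≠ 0 := by positivity
  have hd9 : ((k:ℝ)+2) ≠ 0 := by positivity
  have hp1 : (2:ℝ)^(2*m+2*k+3) ≠ 0 := by positivity
  have hp2 : (2:ℝ)^(2*m+2*k+1) ≠ 0 := by positivity
  have hpow : (2:ℝ)^(2*m+2*k+3) = 4 * 2^(2*m+2*k+1) := by
    rw [show 2*m+2*k+3 = (2*m+2*k+1)+2 from by ring, pow_add]; norm_num; ring
  rw [hpow]
  field_simp
  ring

lemma lemC (M : ℕ) :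
    cc (M+1) * ww (M+1) M * Tsum M M = 1/(((M:ℝ)+1)*(2*(M:ℝ)+1)) := by
  simp only [cc, ww]
  rw [Tsum_diag]
  rw [show 2*(M+1) - 1 = 2*M+1 from by omega]
  rw [chcast (2*(M+1)) (M+1) (by omega),
      chcast (M+1) M (by omega),
      chcast (2*(M+1)) (2*M) (by omega)]
  simp only [show 2*(M+1) - (M+1) = M+1 from by omega,
      show (M+1) - M = 1 from by omega,
      show 2*(M+1) - 2*M = 2 from by omega]
  have f1 : ((2*(M+1))! : ℝ) = (2*(M:ℝ)+2)*(2*(M:ℝ)+1) * ((2*M)! : ℝ) := by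
    rw [show 2*(M+1) = (2*M)+1+1 from by ring, fact_step, fact_step]; push_cast; ring
  have f2 : ((M+1)! : ℝ) = ((M:ℝ)+1)*(M ! : ℝ) := fact_step M
  have f3 : ((2*M+1)! : ℝ) = (2*(M:ℝ)+1) * ((2*M)! : ℝ) := by
    rw [fact_step]; push_cast; ring
  rw [f1, f2, f3]
  have h1 : ((2*M)! : ℝ) ≠ 0 := by positivity
  have h2 : (M ! : ℝ) ≠ 0 := by positivity
  have hd1 : (2*(M:ℝ)+2) ≠ 0 := by positivity
  have hd2 : (2*(M:ℝ)+1) ≠ 0 := by positivity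
  have hd3 : ((M:ℝ)+1) ≠ 0 := by positivity
  have hpow : (2:ℝ)^(2*M+1) = 2 * 4^M := by
    rw [show 2*M+1 = 2*M+1 from rfl, pow_add, pow_mul]; norm_num; ring
  rw [hpow]
  have h4 : (4:ℝ)^M ≠ 0 := by positivity
  simp only [Nat.factorial_one, Nat.factorial_two]
  field_simp
  ring_nf
  rw [show ((-1:ℝ))^(M*2) = 1 from by rw [mul_comm M 2, pow_mul]; norm_num]
  ring

lemma Ssum_eq (M : ℕ) : Ssum M = cc M * ∑ m ∈ Finset.range M, ww M m * Tsum M m := rfl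

/-- The recurrence `S(M+1) = S(M) - 1/(M+1) + 2/(2M+1)` for all `M ≥ 1`. -/
theorem Ssum_recurrence (M : ℕ) (hM : 1 ≤ M) :
    Ssum (M + 1) = Ssum M - 1 / ((M : ℝ) + 1) + 2 / (2 * (M : ℝ) + 1) := by
  have main : Ssum (M+1) = Ssum M + 1/(((M:ℝ)+1)*(2*(M:ℝ)+1)) := by
    rw [Ssum_eq, Ssum_eq]
    rw [Finset.sum_range_succ' (fun m => ww (M+1) m * Tsum (M+1) m) M]
    have h1 : ∑ m ∈ Finset.range M, ww (M+1) (m+1) * Tsum (M+1) (m+1)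
        = ∑ m ∈ Finset.range M, ww (M+1) (m+1) * Tsum M (m+1)
          - ∑ m ∈ Finset.range M, ww (M+1) (m+1) * Tsum M m := by
      rw [← Finset.sum_sub_distrib]
      exact Finset.sum_congr rfl (fun m _ => by rw [Tsum_succ]; ring)
    rw [h1, Tsum_zero]
    have h2 : (∑ m ∈ Finset.range M, ww (M+1) (m+1) * Tsum M (m+1)) + ww (M+1) 0 * Tsum M 0
        = ∑ m ∈ Finset.range (M+1), ww (M+1) m * Tsum M m := by
      rw [Finset.sum_range_succ' (fun m => ww (M+1) m * Tsum M m) M]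
    rw [Tsum_zero] at h2
    have h3 : ∑ m ∈ Finset.range (M+1), ww (M+1) m * Tsum M m
        = (∑ m ∈ Finset.range M, ww (M+1) m * Tsum M m) + ww (M+1) M * Tsum M M :=
      Finset.sum_range_succ _ M
    have rearrange : cc (M+1) * ((∑ m ∈ Finset.range M, ww (M+1) (m+1) * Tsum M (m+1)
          - ∑ m ∈ Finset.range M, ww (M+1) (m+1) * Tsum M m) + ww (M+1) 0 * 1)
        = (∑ m ∈ Finset.range M, cc (M+1) * (ww (M+1) m - ww (M+1) (m+1)) * Tsum M m)
          + cc (M+1) * ww (M+1) M * Tsum M M := by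
      have e : (∑ m ∈ Finset.range M, ww (M+1) (m+1) * Tsum M (m+1)
          - ∑ m ∈ Finset.range M, ww (M+1) (m+1) * Tsum M m) + ww (M+1) 0 * 1
          = (∑ m ∈ Finset.range M, (ww (M+1) m - ww (M+1) (m+1)) * Tsum M m)
            + ww (M+1) M * Tsum M M := by
        have := h2
        have e2 : (∑ m ∈ Finset.range M, ww (M+1) (m+1) * Tsum M (m+1))
            = (∑ m ∈ Finset.range M, ww (M+1) m * Tsum M m) + ww (M+1) M * Tsum M M
              - ww (M+1) 0 * 1 := by
          rw [← h3, ← h2]; ring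
        have e4 : (∑ m ∈ Finset.range M, ww (M+1) m * Tsum M m)
            - ∑ m ∈ Finset.range M, ww (M+1) (m+1) * Tsum M m
            = ∑ m ∈ Finset.range M, (ww (M+1) m - ww (M+1) (m+1)) * Tsum M m := by
          rw [← Finset.sum_sub_distrib]
          exact Finset.sum_congr rfl (fun m _ => by ring)
        rw [e2, ← e4]
        ring
      rw [e, mul_add, Finset.mul_sum]
      congr 1
      · exact Finset.sum_congr rfl (fun m _ => by ring)
      · ring
    rw [rearrange]
    have h4 : ∑ m ∈ Finset.range M, cc (M+1) * (ww (M+1) m - ww (M+1) (m+1)) * Tsum M m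
        = ∑ m ∈ Finset.range M, cc M * ww M m * Tsum M m := by
      refine Finset.sum_congr rfl (fun m hm => ?_)
      simp only [Finset.mem_range] at hm
      obtain ⟨k, hk⟩ : ∃ k, M = m + k + 1 := ⟨M - m - 1, by omega⟩
      rw [hk]
      have := lemA m k
      rw [show m+k+1+1 = m+k+2 from rfl]
      rw [this]
    rw [h4, lemC]
    rw [Finset.mul_sum]
    congr 1
    exact Finset.sum_congr rfl (fun m _ => by ring)
  rw [main]
  have hd1 : ((M:ℝ)+1) ≠ 0 := by positivity
  have hd2 : (2*(M:ℝ)+1) ≠ 0 := by positivity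
  field_simp
  ring
end

section
/- For all nonnegative integers p and q, (-1)^{q+1} · T(p,q) = ∑_{v=0}^{2q+1} ∑_{s=p+q+2-v}^{2p+2q+2-v} (-1)^v · C(2q+1, v) · C(2p+1, s). -/
/-- Binomial coefficient `C(a,b)` with integer lower index, equal to `0` when
`b < 0` (and when `b > a`, via `Nat.choose`). -/
noncomputable def chooseZ (a : ℕ) (b : ℤ) : ℝ :=
  if 0 ≤ b then (a.choose b.toNat : ℝ) else 0

/-- `T(p,q) = (2p+1)!(2q)!/(p! q! (p+q+1)!)`. -/
noncomputable def Tcat (p q : ℕ) : ℝ :=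
  (((2 * p + 1).factorial : ℝ) * ((2 * q).factorial : ℝ)) /
    ((p.factorial : ℝ) * (q.factorial : ℝ) * ((p + q + 1).factorial : ℝ))


open Polynomial Finset

noncomputable def Gpoly (p q : ℕ) : Polynomial ℝ :=
  (1 - Polynomial.X) ^ (2 * p + 1) * (1 + Polynomial.X) ^ (2 * q)

noncomputable def dZ (f : Polynomial ℝ) (m : ℤ) : ℝ :=
  if 0 ≤ m then f.coeff m.toNat else 0


lemma dZ_of_neg (f : Polynomial ℝ) {m : ℤ} (h : m < 0) : dZ f m = 0 := by
  simp [dZ, not_le.2 h]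

lemma dZ_add (f g : Polynomial ℝ) (m : ℤ) : dZ (f + g) m = dZ f m + dZ g m := by
  unfold dZ; split <;> simp

lemma dZ_sub (f g : Polynomial ℝ) (m : ℤ) : dZ (f - g) m = dZ f m - dZ g m := by
  unfold dZ; split <;> simp

lemma dZ_C_mul (a : ℝ) (f : Polynomial ℝ) (m : ℤ) : dZ (Polynomial.C a * f) m = a * dZ f m := by
  unfold dZ; split <;> simp

lemma dZ_X_mul (f : Polynomial ℝ) (m : ℤ) : dZ (Polynomial.X * f) m = dZ f (m - 1) := by
  unfold dZ
  rcases lt_trichotomy m 0 with h | h | h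
  · rw [if_neg (by omega), if_neg (by omega)]
  · subst h; simp
  · rw [if_pos (by omega), if_pos (by omega)]
    have : m.toNat = (m - 1).toNat + 1 := by omega
    rw [this, Polynomial.coeff_X_mul]

lemma dZ_derivative (f : Polynomial ℝ) (m : ℤ) :
    dZ (Polynomial.derivative f) m = ((m + 1 : ℤ) : ℝ) * dZ f (m + 1) := by
  unfold dZ
  rcases lt_trichotomy m (-1) with h | h | h
  · rw [if_neg (by omega), if_neg (by omega)]; ring
  · subst h; norm_num
  · rw [if_pos (by omega), if_pos (by omega), Polynomial.coeff_derivative]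
    have h1 : (m + 1).toNat = m.toNat + 1 := by omega
    have h2 : ((m.toNat : ℤ) : ℝ) = (m : ℝ) := by norm_cast; omega
    rw [h1]
    push_cast at h2 ⊢
    rw [h2]; ring

lemma Gpoly_succ (p q : ℕ) :
    Gpoly (p + 1) q
      = Gpoly p q - Polynomial.C 2 * (Polynomial.X * Gpoly p q)
          + Polynomial.X * (Polynomial.X * Gpoly p q) := by
  unfold Gpoly
  have h : 2 * (p + 1) + 1 = (2 * p + 1) + 2 := by ring
  rw [h, pow_add]
  simp only [map_ofNat]
  ring

lemma Gpoly_ode (p q : ℕ) :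
    (1 - Polynomial.X ^ 2) * Polynomial.derivative (Gpoly p q)
      = (Polynomial.C (((2 * q : ℕ) : ℝ)) - Polynomial.C (((2 * p + 1 : ℕ) : ℝ))
          - Polynomial.C (((2 * p + 2 * q + 1 : ℕ) : ℝ)) * Polynomial.X) * Gpoly p q := by
  unfold Gpoly
  rcases q with _ | q
  · simp only [Nat.mul_zero, pow_zero, mul_one, derivative_pow, derivative_sub,
      derivative_one, derivative_X, Nat.add_sub_cancel, Polynomial.C_eq_natCast]
    push_cast
    ring
  · have h1 : 2 * (q + 1) = (2 * q + 1) + 1 := by ring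
    rw [h1]
    simp only [derivative_mul, derivative_pow, derivative_sub, derivative_add,
      derivative_one, derivative_X, Nat.add_sub_cancel, Polynomial.C_eq_natCast]
    push_cast
    ring

lemma dZ_R1 (p q : ℕ) (m : ℤ) :
    dZ (Gpoly (p + 1) q) m
      = dZ (Gpoly p q) m - 2 * dZ (Gpoly p q) (m - 1) + dZ (Gpoly p q) (m - 2) := by
  rw [Gpoly_succ, dZ_add, dZ_sub, dZ_C_mul, dZ_X_mul, dZ_X_mul, dZ_X_mul,
    show m - 1 - 1 = m - 2 by ring]

lemma dZ_R2 (p q : ℕ) (m : ℤ) :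
    ((m : ℝ) + 1) * dZ (Gpoly p q) (m + 1)
      = ((2 * q : ℝ) - (2 * p + 1)) * dZ (Gpoly p q) m
        + (((m : ℝ) - 1) - ((2 * p : ℝ) + 2 * q + 1)) * dZ (Gpoly p q) (m - 1) := by
  have h := congrArg (fun f => dZ f m) (Gpoly_ode p q)
  rw [show (1 - Polynomial.X ^ 2) * Polynomial.derivative (Gpoly p q)
        = Polynomial.derivative (Gpoly p q)
          - Polynomial.X * (Polynomial.X * Polynomial.derivative (Gpoly p q)) by ring,
      show (Polynomial.C (((2 * q : ℕ) : ℝ)) - Polynomial.C (((2 * p + 1 : ℕ) : ℝ))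
          - Polynomial.C (((2 * p + 2 * q + 1 : ℕ) : ℝ)) * Polynomial.X) * Gpoly p q
        = Polynomial.C (((2 * q : ℕ) : ℝ)) * Gpoly p q
          - Polynomial.C (((2 * p + 1 : ℕ) : ℝ)) * Gpoly p q
          - Polynomial.C (((2 * p + 2 * q + 1 : ℕ) : ℝ)) * (Polynomial.X * Gpoly p q) by ring]
      at h
  rw [dZ_sub, dZ_sub, dZ_sub, dZ_C_mul, dZ_C_mul, dZ_C_mul, dZ_X_mul, dZ_X_mul, dZ_X_mul,
    dZ_derivative, dZ_derivative, show m - 1 - 1 + 1 = m - 1 by ring] at h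
  push_cast at h
  linarith [h]

lemma chooseZ_natCast (a t : ℕ) : chooseZ a (t : ℤ) = (a.choose t : ℝ) := by
  simp [chooseZ]

lemma chooseZ_of_neg (a : ℕ) {s : ℤ} (h : s < 0) : chooseZ a s = 0 := by
  simp [chooseZ, not_le.2 h]

lemma chooseZ_of_gt (a : ℕ) {s : ℤ} (h : (a : ℤ) < s) : chooseZ a s = 0 := by
  unfold chooseZ
  split
  · rw [Nat.choose_eq_zero_of_lt (by omega)]; simp
  · rfl

lemma coeff_one_sub_X_pow (k i : ℕ) :
    ((1 - Polynomial.X : Polynomial ℝ) ^ k).coeff i = (-1) ^ i * (k.choose i : ℝ) := by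
  induction k generalizing i with
  | zero =>
    cases i <;> simp [Polynomial.coeff_one]
  | succ k ih =>
    rw [pow_succ, mul_comm, one_sub_mul]
    cases i with
    | zero => simp [ih]
    | succ i =>
      rw [Polynomial.coeff_sub, Polynomial.coeff_X_mul, ih, ih,
        Nat.choose_succ_succ']
      push_cast
      ring

lemma coeffG (p q n : ℕ) :
    (Gpoly p q).coeff n
      = ∑ s ∈ Finset.range (2 * p + 2),
          (-1) ^ s * ((2 * p + 1).choose s : ℝ) * chooseZ (2 * q) ((n : ℤ) - s) := by
  have hf : ∀ N : ℕ, ∀ M : ℕ, M ≤ N → (∀ s, M ≤ s → s < N →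
      (-1 : ℝ) ^ s * ((2 * p + 1).choose s : ℝ) * chooseZ (2 * q) ((n : ℤ) - s) = 0) →
      (∑ s ∈ Finset.range M, (-1 : ℝ) ^ s * ((2 * p + 1).choose s : ℝ)
          * chooseZ (2 * q) ((n : ℤ) - s))
        = ∑ s ∈ Finset.range N, (-1 : ℝ) ^ s * ((2 * p + 1).choose s : ℝ)
            * chooseZ (2 * q) ((n : ℤ) - s) := by
    intro N M hMN hz
    refine Finset.sum_subset (Finset.range_subset_range.2 hMN) ?_
    intro s hs hs'
    simp only [Finset.mem_range] at hs hs'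
    exact hz s (by omega) hs
  unfold Gpoly
  rw [Polynomial.coeff_mul, Finset.Nat.sum_antidiagonal_eq_sum_range_succ_mk]
  simp only [coeff_one_sub_X_pow, Polynomial.coeff_one_add_X_pow]
  have h1 : (∑ k ∈ Finset.range (n + 1),
        (-1 : ℝ) ^ k * ((2 * p + 1).choose k : ℝ) * ((2 * q).choose (n - k) : ℝ))
      = ∑ k ∈ Finset.range (n + 1),
          (-1 : ℝ) ^ k * ((2 * p + 1).choose k : ℝ) * chooseZ (2 * q) ((n : ℤ) - k) := by
    refine Finset.sum_congr rfl ?_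
    intro k hk
    simp only [Finset.mem_range] at hk
    have : ((n : ℤ) - k) = ((n - k : ℕ) : ℤ) := by omega
    rw [this, chooseZ_natCast]
  calc (∑ k ∈ Finset.range (n + 1),
        (-1 : ℝ) ^ k * ((2 * p + 1).choose k : ℝ) * ((2 * q).choose (n - k) : ℝ))
      = ∑ k ∈ Finset.range (n + 1),
          (-1 : ℝ) ^ k * ((2 * p + 1).choose k : ℝ) * chooseZ (2 * q) ((n : ℤ) - k) := h1
    _ = ∑ k ∈ Finset.range (n + 1 + (2 * p + 2)),
          (-1 : ℝ) ^ k * ((2 * p + 1).choose k : ℝ) * chooseZ (2 * q) ((n : ℤ) - k) := by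
        refine hf _ _ (by omega) ?_
        intro s hs _
        rw [chooseZ_of_neg _ (by omega)]
        ring
    _ = ∑ s ∈ Finset.range (2 * p + 2),
          (-1 : ℝ) ^ s * ((2 * p + 1).choose s : ℝ) * chooseZ (2 * q) ((n : ℤ) - s) := by
        refine (hf _ _ (by omega) ?_).symm
        intro s hs _
        rw [Nat.choose_eq_zero_of_lt (by omega)]
        simp

lemma dZ_natCast (f : Polynomial ℝ) (n : ℕ) : dZ f ((n : ℕ) : ℤ) = f.coeff n := by
  simp [dZ]

lemma Tcat_succ (p q : ℕ) :
    Tcat (p + 1) q * (((p : ℝ) + q + 2) * ((p : ℝ) + 1))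
      = Tcat p q * ((2 * (p : ℝ) + 3) * (2 * (p : ℝ) + 2)) := by
  unfold Tcat
  have h1 : 2 * (p + 1) + 1 = (2 * p + 1) + 1 + 1 := by ring
  have h2 : (p + 1) + q + 1 = (p + q + 1) + 1 := by ring
  simp only [h1, h2, Nat.factorial_succ]
  have hpq0 : ((p + q).factorial : ℝ) ≠ 0 := Nat.cast_ne_zero.2 (Nat.factorial_ne_zero _)
  have hp : (p.factorial : ℝ) ≠ 0 := Nat.cast_ne_zero.2 (Nat.factorial_ne_zero p)
  have hq : (q.factorial : ℝ) ≠ 0 := Nat.cast_ne_zero.2 (Nat.factorial_ne_zero q)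
  have hpq : ((p + q + 1).factorial : ℝ) ≠ 0 := Nat.cast_ne_zero.2 (Nat.factorial_ne_zero _)
  have hP : ((p : ℝ) + 1) ≠ 0 := by positivity
  have hQ : ((p : ℝ) + q + 2) ≠ 0 := by positivity
  field_simp
  push_cast
  ring

lemma Tcat_zero (q : ℕ) : Tcat 0 q = ((2 * q).choose q : ℝ) / ((q : ℝ) + 1) := by
  unfold Tcat
  have key : ((2 * q).choose q : ℝ) * (q.factorial : ℝ) * (q.factorial : ℝ)
      = ((2 * q).factorial : ℝ) := by
    have := Nat.choose_mul_factorial_mul_factorial (show q ≤ 2 * q by omega)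
    have h2 : 2 * q - q = q := by omega
    rw [h2] at this
    exact_mod_cast this
  have hq : (q.factorial : ℝ) ≠ 0 := Nat.cast_ne_zero.2 (Nat.factorial_ne_zero q)
  have hQ : ((q : ℝ) + 1) ≠ 0 := by positivity
  have h3 : (0 + q + 1) = q + 1 := by omega
  rw [h3, Nat.factorial_succ]
  simp only [Nat.mul_zero, Nat.zero_add, Nat.factorial]
  field_simp
  push_cast
  nlinarith [key]

lemma choose_succ_real (q : ℕ) :
    ((2 * q).choose (q + 1) : ℝ) * ((q : ℝ) + 1) = ((2 * q).choose q : ℝ) * (q : ℝ) := by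
  have := Nat.choose_succ_right_eq (2 * q) q
  have h2 : 2 * q - q = q := by omega
  rw [h2] at this
  exact_mod_cast this

lemma base_case (q : ℕ) :
    dZ (Gpoly 0 q) ((0 : ℤ) + q) = (-1 : ℝ) ^ 0 * Tcat 0 q
      ∧ dZ (Gpoly 0 q) ((0 : ℤ) + q + 1) = (-1 : ℝ) ^ (0 + 1) * Tcat 0 q := by
  have hcoeff : ∀ n : ℕ, (Gpoly 0 q).coeff n
      = chooseZ (2 * q) ((n : ℤ)) - chooseZ (2 * q) ((n : ℤ) - 1) := by
    intro n
    rw [coeffG]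
    rw [Finset.sum_range_succ, Finset.sum_range_succ]
    norm_num
    ring
  have hsym : chooseZ (2 * q) ((q : ℤ) - 1) = ((2 * q).choose (q + 1) : ℝ) := by
    rcases Nat.eq_zero_or_pos q with h | h
    · subst h; rw [chooseZ_of_neg _ (by norm_num)]; simp
    · have : ((q : ℤ) - 1) = ((q - 1 : ℕ) : ℤ) := by omega
      rw [this, chooseZ_natCast]
      have : (2 * q).choose (q - 1) = (2 * q).choose (q + 1) := by
        rw [← Nat.choose_symm (by omega)]
        congr 1
        omega
      rw [this]
  have hQ : ((q : ℝ) + 1) ≠ 0 := by positivity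
  have hcs := choose_succ_real q
  constructor
  · have h0 : ((0 : ℤ) + q) = ((q : ℕ) : ℤ) := by omega
    rw [h0, dZ_natCast, hcoeff, hsym, chooseZ_natCast, Tcat_zero]
    field_simp
    linarith [hcs]
  · have h0 : ((0 : ℤ) + q + 1) = (((q + 1 : ℕ)) : ℤ) := by omega
    rw [h0, dZ_natCast, hcoeff, Tcat_zero]
    have h1 : (((q + 1 : ℕ) : ℤ)) = ((q : ℤ) + 1) := by omega
    have h2 : ((q : ℤ) + 1 - 1) = ((q : ℕ) : ℤ) := by omega
    rw [h1, h2, chooseZ_natCast, show ((q:ℤ)+1) = (((q+1:ℕ)):ℤ) by omega, chooseZ_natCast]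
    field_simp
    linear_combination hcs

lemma main_ind (p q : ℕ) :
    dZ (Gpoly p q) ((p : ℤ) + q) = (-1 : ℝ) ^ p * Tcat p q
      ∧ dZ (Gpoly p q) ((p : ℤ) + q + 1) = (-1 : ℝ) ^ (p + 1) * Tcat p q := by
  induction p with
  | zero => exact_mod_cast base_case q
  | succ p ih =>
    obtain ⟨ha, hb⟩ := ih
    have hD : ((p : ℝ) + q + 2) ≠ 0 := by positivity
    have hP1 : ((p : ℝ) + 1) ≠ 0 := by positivity
    -- R2 at m = p + q : gives relation between b, a, cm1
    have rel2 := dZ_R2 p q ((p : ℤ) + q)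
    -- R2 at m = p + q + 1 : gives relation between c2, b, a
    have rel1 := dZ_R2 p q ((p : ℤ) + q + 1)
    rw [show ((p : ℤ) + q + 1 + 1) = (p : ℤ) + q + 2 by ring,
        show ((p : ℤ) + q + 1 - 1) = (p : ℤ) + q by ring] at rel1
    rw [show ((p : ℤ) + q - 1) = (p : ℤ) + q - 1 by ring] at rel2
    push_cast at rel1 rel2
    have hT := Tcat_succ p q
    have hnewa := dZ_R1 p q ((p : ℤ) + q + 1)
    have hnewb := dZ_R1 p q ((p : ℤ) + q + 2)
    rw [show ((p : ℤ) + q + 1 - 1) = (p : ℤ) + q by ring,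
        show ((p : ℤ) + q + 1 - 2) = (p : ℤ) + q - 1 by ring] at hnewa
    rw [show ((p : ℤ) + q + 2 - 1) = (p : ℤ) + q + 1 by ring,
        show ((p : ℤ) + q + 2 - 2) = (p : ℤ) + q by ring] at hnewb
    rw [ha, hb] at rel1 rel2 hnewa hnewb
    constructor
    · rw [show (((p + 1 : ℕ) : ℤ) + q) = (p : ℤ) + q + 1 by push_cast; ring, hnewa]
      apply mul_left_cancel₀ (mul_ne_zero hD hP1)
      linear_combination ((p : ℝ) + 1) * rel2 + (-1 : ℝ) ^ p * hT
    · rw [show (((p + 1 : ℕ) : ℤ) + q + 1) = (p : ℤ) + q + 2 by push_cast; ring, hnewb]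
      apply mul_left_cancel₀ (mul_ne_zero hD hP1)
      linear_combination ((p : ℝ) + 1) * rel1 - (-1 : ℝ) ^ p * hT

lemma alt_partial (n m : ℕ) :
    ∑ v ∈ Finset.range (m + 1), (-1 : ℝ) ^ v * ((n + 1).choose v : ℝ)
      = (-1) ^ m * (n.choose m : ℝ) := by
  induction m with
  | zero => simp
  | succ m ih =>
    rw [Finset.sum_range_succ, ih, Nat.choose_succ_succ' n m]
    push_cast
    ring

lemma sum_Icc_change_lo (f : ℤ → ℝ) (lo1 lo2 hi : ℤ)
    (h1 : ∀ s, lo1 ≤ s → s < lo2 → f s = 0) (h2 : ∀ s, lo2 ≤ s → s < lo1 → f s = 0) :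
    ∑ s ∈ Finset.Icc lo1 hi, f s = ∑ s ∈ Finset.Icc lo2 hi, f s := by
  have key : ∀ a b : ℤ, b ≤ a → (∀ s, b ≤ s → s < a → f s = 0) →
      ∑ s ∈ Finset.Icc a hi, f s = ∑ s ∈ Finset.Icc b hi, f s := by
    intro a b hab hz
    refine Finset.sum_subset (Finset.Icc_subset_Icc_left hab) ?_
    intro x hx hx'
    simp only [Finset.mem_Icc] at hx hx'
    exact hz x hx.1 (by omega)
  rcases le_total lo1 lo2 with h | h
  · exact ((key lo2 lo1 h (fun s hs hs' => h1 s hs hs')).symm)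
  · exact key lo1 lo2 h (fun s hs hs' => h2 s hs hs')

lemma sum_Icc_int_eq_range (f : ℤ → ℝ) (N : ℕ) :
    ∑ s ∈ Finset.Icc (0 : ℤ) (N : ℤ), f s = ∑ t ∈ Finset.range (N + 1), f (t : ℤ) := by
  refine Finset.sum_nbij' (fun s => s.toNat) (fun t => (t : ℤ)) ?_ ?_ ?_ ?_ ?_
  · intro a ha; simp only [Finset.mem_Icc] at ha; simp only [Finset.mem_range]; beta_reduce; omega
  · intro a ha; simp only [Finset.mem_range] at ha; simp only [Finset.mem_Icc]; beta_reduce; omega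
  · intro a ha; simp only [Finset.mem_Icc] at ha; beta_reduce; omega
  · intro a ha; simp only [Finset.mem_range] at ha; beta_reduce; omega
  · intro a ha; simp only [Finset.mem_Icc] at ha
    beta_reduce
    congr 1
    omega

lemma tail_eval (p q t : ℕ) :
    ∑ v ∈ Finset.range (2 * q + 2),
        (if (p : ℤ) + q + 2 - t ≤ (v : ℤ) then (-1 : ℝ) ^ v * ((2 * q + 1).choose v : ℝ) else 0)
      = (-1) ^ (p + q + t) * chooseZ (2 * q) ((p : ℤ) + q + 1 - t) := by
  have full : ∑ v ∈ Finset.range (2 * q + 2), (-1 : ℝ) ^ v * ((2 * q + 1).choose v : ℝ) = 0 := by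
    have h := alt_partial (2 * q) (2 * q + 1)
    rw [Nat.choose_eq_zero_of_lt (by omega)] at h
    simpa using h
  by_cases hbig : p + q + 2 ≤ t
  · rw [chooseZ_of_neg _ (by omega), mul_zero]
    rw [← full]
    refine Finset.sum_congr rfl ?_
    intro v hv
    rw [if_pos (by omega)]
  · -- t ≤ p + q + 1 ; set m = p + q + 2 - t (ℕ), 1 ≤ m
    set m : ℕ := p + q + 2 - t with hm
    have hm1 : 1 ≤ m := by omega
    have hcond : ∀ v : ℕ, ((p : ℤ) + q + 2 - t ≤ (v : ℤ)) ↔ m ≤ v := by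
      intro v; omega
    by_cases hm2 : 2 * q + 2 ≤ m
    · -- all conditions false
      rw [chooseZ_of_gt _ (by omega), mul_zero]
      refine Finset.sum_eq_zero ?_
      intro v hv
      simp only [Finset.mem_range] at hv
      rw [if_neg (by rw [hcond]; omega)]
    · -- 1 ≤ m ≤ 2q+1
      have hsplit : ∑ v ∈ Finset.range (2 * q + 2),
          (if (p : ℤ) + q + 2 - t ≤ (v : ℤ) then (-1 : ℝ) ^ v * ((2 * q + 1).choose v : ℝ) else 0)
          = ∑ v ∈ Finset.Ico m (2 * q + 2), (-1 : ℝ) ^ v * ((2 * q + 1).choose v : ℝ) := by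
        rw [Finset.range_eq_Ico, ← Finset.sum_Ico_consecutive _ (by omega : 0 ≤ m) (by omega : m ≤ 2 * q + 2)]
        have hz : ∑ v ∈ Finset.Ico 0 m,
            (if (p : ℤ) + q + 2 - t ≤ (v : ℤ) then (-1 : ℝ) ^ v * ((2 * q + 1).choose v : ℝ) else 0) = 0 := by
          refine Finset.sum_eq_zero ?_
          intro v hv
          simp only [Finset.mem_Ico] at hv
          rw [if_neg (by rw [hcond]; omega)]
        rw [hz, zero_add]
        refine Finset.sum_congr rfl ?_
        intro v hv
        simp only [Finset.mem_Ico] at hv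
        rw [if_pos (by rw [hcond]; omega)]
      rw [hsplit]
      have hIco : ∑ v ∈ Finset.Ico m (2 * q + 2), (-1 : ℝ) ^ v * ((2 * q + 1).choose v : ℝ)
          = - ∑ v ∈ Finset.range m, (-1 : ℝ) ^ v * ((2 * q + 1).choose v : ℝ) := by
        have := Finset.sum_Ico_consecutive
          (fun v => (-1 : ℝ) ^ v * ((2 * q + 1).choose v : ℝ))
          (by omega : (0:ℕ) ≤ m) (by omega : m ≤ 2 * q + 2)
        rw [← Finset.range_eq_Ico] at this
        beta_reduce at this
        rw [← Finset.range_eq_Ico, full] at this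
        linarith [this]
      rw [hIco]
      have hr : m = (m - 1) + 1 := by omega
      rw [hr, alt_partial (2 * q) (m - 1)]
      have hidx : ((p : ℤ) + q + 1 - t) = (((m - 1 : ℕ)) : ℤ) := by omega
      rw [hidx, chooseZ_natCast]
      have hsign : (-1 : ℝ) ^ (p + q + t) = -(-1 : ℝ) ^ (m - 1) := by
        have h2 : -(-1 : ℝ) ^ (m - 1) = (-1 : ℝ) ^ (m - 1 + 1) := by rw [pow_succ]; ring
        rw [h2, neg_one_pow_eq_pow_mod_two, neg_one_pow_eq_pow_mod_two (n := m - 1 + 1)]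
        congr 1
        omega
      rw [hsign]
      ring

/-- For all nonnegative integers `p, q`,
`(-1)^{q+1} T(p,q) = ∑_{v=0}^{2q+1} ∑_{s=p+q+2-v}^{2p+2q+2-v} (-1)^v C(2q+1, v) C(2p+1, s)`. -/
theorem T_double_sum (p q : ℕ) :
    (-1 : ℝ) ^ (q + 1) * Tcat p q
      = ∑ v ∈ Finset.range (2 * q + 2),
          ∑ s ∈ Finset.Icc ((p : ℤ) + q + 2 - v) (2 * (p : ℤ) + 2 * q + 2 - v),
            (-1 : ℝ) ^ v * ((2 * q + 1).choose v : ℝ) * chooseZ (2 * p + 1) s := by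
  have hstep1 : ∀ v ∈ Finset.range (2 * q + 2),
      (∑ s ∈ Finset.Icc ((p : ℤ) + q + 2 - v) (2 * (p : ℤ) + 2 * q + 2 - v),
          (-1 : ℝ) ^ v * ((2 * q + 1).choose v : ℝ) * chooseZ (2 * p + 1) s)
        = ∑ s ∈ Finset.Icc ((p : ℤ) - q + 1) (2 * (p : ℤ) + 1),
            (if (p : ℤ) + q + 2 - v ≤ s then
              (-1 : ℝ) ^ v * ((2 * q + 1).choose v : ℝ) * chooseZ (2 * p + 1) s else 0) := by
    intro v hv
    simp only [Finset.mem_range] at hv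
    have h1 : (∑ s ∈ Finset.Icc ((p : ℤ) + q + 2 - v) (2 * (p : ℤ) + 2 * q + 2 - v),
        (-1 : ℝ) ^ v * ((2 * q + 1).choose v : ℝ) * chooseZ (2 * p + 1) s)
        = ∑ s ∈ Finset.Icc ((p : ℤ) + q + 2 - v) (2 * (p : ℤ) + 1),
            (-1 : ℝ) ^ v * ((2 * q + 1).choose v : ℝ) * chooseZ (2 * p + 1) s := by
      refine (Finset.sum_subset (Finset.Icc_subset_Icc_right (by omega)) ?_).symm
      intro x hx hx'
      simp only [Finset.mem_Icc] at hx hx'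
      rw [chooseZ_of_gt _ (by push_cast; omega), mul_zero]
    rw [h1, ← Finset.sum_filter]
    congr 1
    ext x
    simp only [Finset.mem_filter, Finset.mem_Icc]
    omega
  have hstep2 : ∀ s ∈ Finset.Icc ((p : ℤ) - q + 1) (2 * (p : ℤ) + 1),
      (∑ v ∈ Finset.range (2 * q + 2),
          (if (p : ℤ) + q + 2 - v ≤ s then
            (-1 : ℝ) ^ v * ((2 * q + 1).choose v : ℝ) * chooseZ (2 * p + 1) s else 0))
        = chooseZ (2 * p + 1) s * ∑ v ∈ Finset.range (2 * q + 2),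
            (if (p : ℤ) + q + 2 - v ≤ s then (-1 : ℝ) ^ v * ((2 * q + 1).choose v : ℝ) else 0) := by
    intro s _
    rw [Finset.mul_sum]
    refine Finset.sum_congr rfl ?_
    intro v _
    split <;> ring
  have hlo : (∑ s ∈ Finset.Icc ((p : ℤ) - q + 1) (2 * (p : ℤ) + 1),
      chooseZ (2 * p + 1) s * ∑ v ∈ Finset.range (2 * q + 2),
        (if (p : ℤ) + q + 2 - v ≤ s then (-1 : ℝ) ^ v * ((2 * q + 1).choose v : ℝ) else 0))
      = ∑ s ∈ Finset.Icc (0 : ℤ) (2 * (p : ℤ) + 1),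
          chooseZ (2 * p + 1) s * ∑ v ∈ Finset.range (2 * q + 2),
            (if (p : ℤ) + q + 2 - v ≤ s then (-1 : ℝ) ^ v * ((2 * q + 1).choose v : ℝ) else 0) := by
    refine sum_Icc_change_lo _ _ _ _ ?_ ?_
    · intro s _ hs'
      rw [chooseZ_of_neg _ hs', zero_mul]
    · intro s hs hs'
      have hz : (∑ v ∈ Finset.range (2 * q + 2),
          (if (p : ℤ) + q + 2 - v ≤ s then (-1 : ℝ) ^ v * ((2 * q + 1).choose v : ℝ) else 0)) = 0 := by
        refine Finset.sum_eq_zero ?_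
        intro v hv
        simp only [Finset.mem_range] at hv
        rw [if_neg (by omega)]
      rw [hz, mul_zero]
  have hcast : (2 * (p : ℤ) + 1) = ((2 * p + 1 : ℕ) : ℤ) := by push_cast; ring
  symm
  calc (∑ v ∈ Finset.range (2 * q + 2),
        ∑ s ∈ Finset.Icc ((p : ℤ) + q + 2 - v) (2 * (p : ℤ) + 2 * q + 2 - v),
          (-1 : ℝ) ^ v * ((2 * q + 1).choose v : ℝ) * chooseZ (2 * p + 1) s)
      = ∑ v ∈ Finset.range (2 * q + 2),
          ∑ s ∈ Finset.Icc ((p : ℤ) - q + 1) (2 * (p : ℤ) + 1),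
            (if (p : ℤ) + q + 2 - v ≤ s then
              (-1 : ℝ) ^ v * ((2 * q + 1).choose v : ℝ) * chooseZ (2 * p + 1) s else 0) :=
        Finset.sum_congr rfl hstep1
    _ = ∑ s ∈ Finset.Icc ((p : ℤ) - q + 1) (2 * (p : ℤ) + 1),
          ∑ v ∈ Finset.range (2 * q + 2),
            (if (p : ℤ) + q + 2 - v ≤ s then
              (-1 : ℝ) ^ v * ((2 * q + 1).choose v : ℝ) * chooseZ (2 * p + 1) s else 0) :=
        Finset.sum_comm
    _ = ∑ s ∈ Finset.Icc ((p : ℤ) - q + 1) (2 * (p : ℤ) + 1),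
          chooseZ (2 * p + 1) s * ∑ v ∈ Finset.range (2 * q + 2),
            (if (p : ℤ) + q + 2 - v ≤ s then (-1 : ℝ) ^ v * ((2 * q + 1).choose v : ℝ) else 0) :=
        Finset.sum_congr rfl hstep2
    _ = ∑ s ∈ Finset.Icc (0 : ℤ) (2 * (p : ℤ) + 1),
          chooseZ (2 * p + 1) s * ∑ v ∈ Finset.range (2 * q + 2),
            (if (p : ℤ) + q + 2 - v ≤ s then (-1 : ℝ) ^ v * ((2 * q + 1).choose v : ℝ) else 0) := hlo
    _ = ∑ t ∈ Finset.range (2 * p + 1 + 1),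
          chooseZ (2 * p + 1) (t : ℤ) * ∑ v ∈ Finset.range (2 * q + 2),
            (if (p : ℤ) + q + 2 - v ≤ (t : ℤ) then (-1 : ℝ) ^ v * ((2 * q + 1).choose v : ℝ) else 0) := by
        rw [hcast, sum_Icc_int_eq_range]
    _ = ∑ t ∈ Finset.range (2 * p + 2),
          chooseZ (2 * p + 1) (t : ℤ)
            * ((-1 : ℝ) ^ (p + q + t) * chooseZ (2 * q) ((p : ℤ) + q + 1 - t)) := by
        refine Finset.sum_congr (by norm_num) ?_
        intro t _
        congr 1
        have hiff : ∀ v : ℕ, ((p : ℤ) + q + 2 - v ≤ (t : ℤ)) ↔ ((p : ℤ) + q + 2 - t ≤ (v : ℤ)) := by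
          intro v; omega
        simp only [hiff]
        exact tail_eval p q t
    _ = (-1 : ℝ) ^ (p + q) * ∑ s ∈ Finset.range (2 * p + 2),
          (-1 : ℝ) ^ s * ((2 * p + 1).choose s : ℝ) * chooseZ (2 * q) (((p + q + 1 : ℕ) : ℤ) - s) := by
        rw [Finset.mul_sum]
        refine Finset.sum_congr rfl ?_
        intro t _
        rw [chooseZ_natCast, pow_add]
        have h3 : (((p + q + 1 : ℕ) : ℤ) - t) = ((p : ℤ) + q + 1 - t) := by push_cast; ring
        rw [h3]
        ring
    _ = (-1 : ℝ) ^ (p + q) * dZ (Gpoly p q) ((p : ℤ) + q + 1) := by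
        rw [← coeffG p q (p + q + 1), ← dZ_natCast,
          show (((p + q + 1 : ℕ)) : ℤ) = ((p : ℤ) + q + 1) by push_cast; ring]
    _ = (-1 : ℝ) ^ (q + 1) * Tcat p q := by
        rw [(main_ind p q).2, ← mul_assoc, ← pow_add,
          show p + q + (p + 1) = 2 * p + (q + 1) by omega, pow_add, pow_mul]
        norm_num
end
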